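/- arXiv:2311.01762 — 4 statements merged into one kernel-verified Lean document; each statement's English description precedes it below -/
import Mathlib

section
/- Let K be a symmetric positive semi-definite n×n real matrix with smallest eigenvalue s_min, let t > 0, and let k* and y be vectors in ℝ^n. Then |k*ᵀ (I - exp(-tK)) K⁻¹ y| ≤ ‖k*‖₂ · min(t, 1/s_min) · ‖y‖₂, where (I - exp(-tK))K⁻¹ is interpreted via the power series (which is well defined even if K is singular). -/
open Matrix

noncomputable def auxCoef (t : ℝ) (k : ℕ) : ℝ :=
  (-1 : ℝ) ^ k * t ^ (k + 1) / (Nat.factorial (k + 1))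

noncomputable def auxf (t lam : ℝ) : ℝ := ∑' k : ℕ, auxCoef t k * lam ^ k

lemma auxf_summable (t lam : ℝ) : Summable (fun k : ℕ => auxCoef t k * lam ^ k) := by
  apply Summable.of_norm
  have h := (Real.summable_pow_div_factorial (|t| * |lam|)).mul_left |t|
  apply h.of_nonneg_of_le (fun k => norm_nonneg _)
  intro k
  have hfac : (Nat.factorial k : ℝ) ≤ (Nat.factorial (k+1) : ℝ) := by
    exact_mod_cast Nat.factorial_le (Nat.le_succ k)
  have hfk : (0:ℝ) < Nat.factorial k := by positivity
  have hfk1 : (0:ℝ) < Nat.factorial (k+1) := by positivity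
  rw [Real.norm_eq_abs, auxCoef, abs_mul, abs_div, abs_mul, abs_pow, abs_pow, abs_neg, abs_one,
    one_pow, one_mul, abs_of_nonneg (le_of_lt hfk1)]
  rw [abs_pow, mul_pow, pow_succ']
  have heq : |t| * |t| ^ k / (Nat.factorial (k+1) : ℝ) * |lam| ^ k
      = |t| * ((|t| ^ k * |lam| ^ k) / (Nat.factorial (k+1) : ℝ)) := by ring
  rw [heq]
  gcongr

lemma auxf_zero (t : ℝ) : auxf t 0 = t := by
  rw [auxf, tsum_eq_single 0]
  · simp [auxCoef]
  · intro k hk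
    simp [zero_pow hk]

lemma mul_auxf (t lam : ℝ) : lam * auxf t lam = 1 - Real.exp (-(t * lam)) := by
  rw [auxf, ← tsum_mul_left]
  have hterm : ∀ k : ℕ, lam * (auxCoef t k * lam ^ k)
      = -((-(t * lam)) ^ (k+1) / (Nat.factorial (k+1))) := by
    intro k
    have h : (-(t * lam)) ^ (k+1) = (-1:ℝ)^(k+1) * (t*lam)^(k+1) := by rw [neg_pow]
    rw [auxCoef, h, pow_succ (-1:ℝ) k, mul_pow]
    field_simp
    ring
  simp_rw [hterm]
  rw [tsum_neg]
  have hexp : Real.exp (-(t*lam)) = ∑' n : ℕ, (-(t*lam)) ^ n / (Nat.factorial n) := by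
    rw [Real.exp_eq_exp_ℝ, NormedSpace.exp_eq_tsum_div]
  have hsum : Summable (fun n : ℕ => (-(t*lam)) ^ n / (Nat.factorial n)) :=
    Real.summable_pow_div_factorial _
  have := Summable.tsum_eq_zero_add hsum
  rw [hexp, this]
  simp

lemma auxf_nonneg {t lam : ℝ} (ht : 0 ≤ t) (hlam : 0 ≤ lam) : 0 ≤ auxf t lam := by
  rcases eq_or_lt_of_le hlam with h | h
  · rw [← h, auxf_zero]; exact ht
  · have hmul := mul_auxf t lam
    have hexp : Real.exp (-(t*lam)) ≤ 1 := Real.exp_le_one_iff.mpr (by nlinarith)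
    nlinarith

lemma auxf_le_t {t lam : ℝ} (ht : 0 ≤ t) (hlam : 0 ≤ lam) : auxf t lam ≤ t := by
  rcases eq_or_lt_of_le hlam with h | h
  · rw [← h, auxf_zero]
  · have hmul := mul_auxf t lam
    have h1 := Real.add_one_le_exp (-(t*lam))
    nlinarith

lemma auxf_le_inv {t lam : ℝ} (hlam : 0 < lam) : auxf t lam ≤ 1 / lam := by
  have hmul := mul_auxf t lam
  have hexp : 0 < Real.exp (-(t*lam)) := Real.exp_pos _
  rw [le_div_iff₀ hlam]
  nlinarith

noncomputable def diagSandwich {n : ℕ} (U V : Matrix (Fin n) (Fin n) ℝ) :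
    (Fin n → ℝ) →ₗ[ℝ] Matrix (Fin n) (Fin n) ℝ where
  toFun g := U * diagonal g * V
  map_add' g h := by
    have h1 : diagonal (g + h) = diagonal g + diagonal h := by
      rw [diagonal_add]; congr 1
    rw [h1, Matrix.mul_add, Matrix.add_mul]
  map_smul' c g := by simp [diagonal_smul, Matrix.mul_smul, Matrix.smul_mul]

lemma tsum_diagSandwich {n : ℕ} (U V : Matrix (Fin n) (Fin n) ℝ)
    (g : ℕ → (Fin n → ℝ)) (hg : Summable g) :
    (∑' k, U * diagonal (g k) * V) = U * diagonal (fun i => ∑' k, g k i) * V := by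
  have hT := (LinearMap.toContinuousLinearMap (diagSandwich U V)).map_tsum hg
  have h2 : (∑' k, g k) = fun i => ∑' k, g k i := by
    funext i; exact tsum_apply hg
  simpa [diagSandwich, h2] using hT.symm

lemma dot_sandwich {n : ℕ} (U : Matrix (Fin n) (Fin n) ℝ) (w : Fin n → ℝ) (kstar y : Fin n → ℝ) :
    kstar ⬝ᵥ (U * diagonal w * Uᵀ) *ᵥ y
      = ∑ i, (Uᵀ *ᵥ kstar) i * (w i * (Uᵀ *ᵥ y) i) := by
  rw [← mulVec_mulVec, ← mulVec_mulVec, dotProduct_mulVec, ← mulVec_transpose]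
  simp [dotProduct, mulVec_diagonal]

lemma dot_self_sandwich {n : ℕ} (U : Matrix (Fin n) (Fin n) ℝ) (hU : U * Uᵀ = 1)
    (v : Fin n → ℝ) : ∑ i, ((Uᵀ *ᵥ v) i) ^ 2 = ∑ i, v i ^ 2 := by
  have h : (Uᵀ *ᵥ v) ⬝ᵥ (Uᵀ *ᵥ v) = v ⬝ᵥ v := by
    rw [dotProduct_mulVec, vecMul_transpose, mulVec_mulVec, hU, one_mulVec]
  simpa [dotProduct, sq] using h

/-- `(I - exp (-t K)) K⁻¹` interpreted via the power series
`∑_{k≥1} (-1)^{k+1} t^k K^{k-1} / k!`, well defined even for singular `K`. -/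
noncomputable def seriesIsubExpKinv {n : ℕ} (t : ℝ) (K : Matrix (Fin n) (Fin n) ℝ) :
    Matrix (Fin n) (Fin n) ℝ :=
  ∑' k : ℕ, (((-1 : ℝ) ^ k * t ^ (k + 1) / (Nat.factorial (k + 1))) • K ^ k)

theorem kgf_prediction_bound {n : ℕ} (K : Matrix (Fin n) (Fin n) ℝ)
    (hK : K.IsHermitian) (hKpsd : K.PosSemidef) (t : ℝ) (ht : 0 < t)
    (kstar y : Fin n → ℝ)
    (smin : ℝ) (hsmin : smin = ⨅ i, hK.eigenvalues i) :
    |kstar ⬝ᵥ (seriesIsubExpKinv t K) *ᵥ y| ≤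
      Real.sqrt (∑ i, kstar i ^ 2) * (if smin = 0 then t else min t (1 / smin)) *
        Real.sqrt (∑ i, y i ^ 2) := by
  classical
  set lam := hK.eigenvalues with hlamdef
  set U : Matrix (Fin n) (Fin n) ℝ := (hK.eigenvectorUnitary : Matrix (Fin n) (Fin n) ℝ)
    with hUdef
  have hstar : star U = Uᵀ := by
    rw [Matrix.star_eq_conjTranspose, conjTranspose_eq_transpose_of_trivial]
  have hUT : U * Uᵀ = 1 := by rw [← hstar]; exact mem_unitaryGroup_iff.mp hK.eigenvectorUnitary.2
  have hTU : Uᵀ * U = 1 := by rw [← hstar]; exact mem_unitaryGroup_iff'.mp hK.eigenvectorUnitary.2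
  have hspec : K = U * diagonal lam * Uᵀ := by
    rw [← hstar]; simpa using hK.spectral_theorem
  have hpow : ∀ k : ℕ, K ^ k = U * diagonal (fun i => lam i ^ k) * Uᵀ := by
    intro k
    induction k with
    | zero => simp [hUT]
    | succ k ih =>
        rw [pow_succ, ih, hspec]
        have hd : diagonal (fun i => lam i ^ k) * (Uᵀ * U) * diagonal lam
            = diagonal (fun i => lam i ^ (k+1)) := by
          rw [hTU, mul_one, diagonal_mul_diagonal]
          simp [pow_succ]
        calc U * diagonal (fun i => lam i ^ k) * Uᵀ * (U * diagonal lam * Uᵀ)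
            = U * (diagonal (fun i => lam i ^ k) * (Uᵀ * U) * diagonal lam) * Uᵀ := by
              noncomm_ring
          _ = _ := by rw [hd]
  have hg : Summable (fun k : ℕ => (fun i => auxCoef t k * lam i ^ k)) :=
    Pi.summable.mpr fun i => auxf_summable t (lam i)
  have hterm : ∀ k : ℕ, (((-1 : ℝ) ^ k * t ^ (k + 1) / (Nat.factorial (k + 1))) • K ^ k)
      = U * diagonal (fun i => auxCoef t k * lam i ^ k) * Uᵀ := by
    intro k
    rw [hpow k]
    have hdg : diagonal (fun i => auxCoef t k * lam i ^ k)
        = auxCoef t k • diagonal (fun i => lam i ^ k) := by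
      rw [← diagonal_smul]; congr 1
    rw [hdg, Matrix.mul_smul, Matrix.smul_mul]
    rfl
  have hseries : seriesIsubExpKinv t K = U * diagonal (fun i => auxf t (lam i)) * Uᵀ := by
    rw [seriesIsubExpKinv]
    rw [tsum_congr hterm, tsum_diagSandwich U Uᵀ _ hg]
    rfl
  have hval : kstar ⬝ᵥ (seriesIsubExpKinv t K) *ᵥ y
      = ∑ i, (Uᵀ *ᵥ kstar) i * (auxf t (lam i) * (Uᵀ *ᵥ y) i) := by
    rw [hseries]; exact dot_sandwich U _ kstar y
  set a : Fin n → ℝ := Uᵀ *ᵥ kstar with hadef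
  set b : Fin n → ℝ := Uᵀ *ᵥ y with hbdef
  set w : Fin n → ℝ := fun i => auxf t (lam i) with hwdef
  set M : ℝ := if smin = 0 then t else min t (1 / smin) with hMdef
  have hlam0 : ∀ i, 0 ≤ lam i := fun i => hKpsd.eigenvalues_nonneg i
  have hw0 : ∀ i, 0 ≤ w i := fun i => auxf_nonneg ht.le (hlam0 i)
  have hspos : smin ≠ 0 → 0 < smin := by
    intro hs
    have hne : Nonempty (Fin n) := by
      by_contra h
      have : IsEmpty (Fin n) := not_nonempty_iff.mp h
      exact hs (by rw [hsmin, Real.iInf_of_isEmpty])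
    have h0 : 0 ≤ smin := by rw [hsmin]; exact le_ciInf hlam0
    exact lt_of_le_of_ne h0 (Ne.symm hs)
  have hM0 : 0 ≤ M := by
    by_cases hs : smin = 0
    · simp only [hMdef, if_pos hs]; exact ht.le
    · simp only [hMdef, if_neg hs]
      have := hspos hs
      exact le_min ht.le (by positivity)
  have hwM : ∀ i, w i ≤ M := by
    intro i
    by_cases hs : smin = 0
    · simp only [hMdef, if_pos hs]
      exact auxf_le_t ht.le (hlam0 i)
    · have hpos := hspos hs
      have hle : smin ≤ lam i := by rw [hsmin]; exact ciInf_le (Finite.bddBelow_range _) i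
      have hlami : 0 < lam i := lt_of_lt_of_le hpos hle
      simp only [hMdef, if_neg hs]
      refine le_min (auxf_le_t ht.le (hlam0 i)) ?_
      calc w i ≤ 1 / lam i := auxf_le_inv hlami
        _ ≤ 1 / smin := by gcongr
  have ha2 : ∑ i, a i ^ 2 = ∑ i, kstar i ^ 2 := dot_self_sandwich U hUT kstar
  have hb2 : ∑ i, b i ^ 2 = ∑ i, y i ^ 2 := dot_self_sandwich U hUT y
  rw [hval]
  calc |∑ i, a i * (w i * b i)|
      ≤ ∑ i, |a i * (w i * b i)| := Finset.abs_sum_le_sum_abs _ _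
    _ = ∑ i, |a i| * (w i * |b i|) := by
        refine Finset.sum_congr rfl fun i _ => ?_
        rw [abs_mul, abs_mul, abs_of_nonneg (hw0 i)]
    _ ≤ ∑ i, |a i| * (M * |b i|) := by
        refine Finset.sum_le_sum fun i _ => ?_
        exact mul_le_mul_of_nonneg_left
          (mul_le_mul_of_nonneg_right (hwM i) (abs_nonneg _)) (abs_nonneg _)
    _ = M * ∑ i, |a i| * |b i| := by
        rw [Finset.mul_sum]
        exact Finset.sum_congr rfl fun i _ => by ring
    _ ≤ M * (Real.sqrt (∑ i, |a i| ^ 2) * Real.sqrt (∑ i, |b i| ^ 2)) :=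
        mul_le_mul_of_nonneg_left (Real.sum_mul_le_sqrt_mul_sqrt _ _ _) hM0
    _ = M * (Real.sqrt (∑ i, kstar i ^ 2) * Real.sqrt (∑ i, y i ^ 2)) := by
        simp only [sq_abs]
        rw [ha2, hb2]
    _ = Real.sqrt (∑ i, kstar i ^ 2) * M * Real.sqrt (∑ i, y i ^ 2) := by ring
end

section
/- For the all-ones vector 𝟙 ∈ ℝ^n, t > 0 and y ∈ ℝ^n, define F(y) as the limit as ε → 0⁺ of 𝟙ᵀ (𝟙𝟙ᵀ + εI)⁻¹ (I - exp(-t𝟙𝟙ᵀ)) y. Then F(y) = (1 - e^{-tn}) · ȳ, where ȳ = (1/n) Σᵢ yᵢ. -/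
open Matrix Filter

/-! With `J = 𝟙𝟙ᵀ`, the vector `𝟙` is a left eigenvector of `J + εI` (eigenvalue `n + ε`) and,
since `J / n` is idempotent, of `exp (-tJ)` (eigenvalue `e^{-tn}`). Moving `𝟙ᵀ` across both
matrices turns the expression into `(n + ε)⁻¹ (1 - e^{-tn}) ∑ yᵢ`, which is continuous at `ε = 0`. -/

open NormedSpace Nat in
theorem exp_smul_of_isIdempotentElem {𝕂 𝔸 : Type*} [RCLike 𝕂] [Ring 𝔸] [Algebra 𝕂 𝔸]
    [TopologicalSpace 𝔸] [IsTopologicalRing 𝔸] [ContinuousSMul 𝕂 𝔸] [T2Space 𝔸] {p : 𝔸}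
    (hp : IsIdempotentElem p) (s : 𝕂) : exp (s • p) = 1 + (exp s - 1) • p := by
  have hseries : HasSum (fun k => (k !⁻¹ : 𝕂) • (s • p) ^ k) (exp s • p + (1 - p)) := by
    convert ((exp_series_hasSum_exp' (𝕂 := 𝕂) s).smul_const p).add (hasSum_ite_eq 0 (1 - p))
      using 1
    funext k
    rcases k with _ | k
    · simp
    · simp [smul_pow, hp.pow_succ_eq, smul_smul]
  rw [congrFun (exp_eq_tsum 𝕂) (s • p), hseries.tsum_eq, sub_smul, one_smul]
  abel

namespace Matrix

variable {m : Type*} [Fintype m] [DecidableEq m]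

omit [DecidableEq m] in
theorem isIdempotentElem_inv_dotProduct_smul_vecMulVec {K : Type*} [Field K] (u v : m → K) :
    IsIdempotentElem ((v ⬝ᵥ u)⁻¹ • vecMulVec u v) := by
  rw [IsIdempotentElem, smul_mul_smul, vecMulVec_mul_vecMulVec, vecMulVec_smul, smul_smul]
  by_cases h : v ⬝ᵥ u = 0 <;> field_simp [h]

theorem vecMul_exp_smul_vecMulVec {𝕂 : Type*} [RCLike 𝕂] {u v : m → 𝕂} (h : v ⬝ᵥ u ≠ 0)
    (s : 𝕂) : v ᵥ* NormedSpace.exp (s • vecMulVec u v) = NormedSpace.exp (s * (v ⬝ᵥ u)) • v := by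
  have hP := exp_smul_of_isIdempotentElem (isIdempotentElem_inv_dotProduct_smul_vecMulVec u v)
    (s * (v ⬝ᵥ u))
  rw [mul_smul, smul_inv_smul₀ h] at hP
  rw [hP, vecMul_add, vecMul_one, vecMul_smul, vecMul_smul, vecMul_vecMulVec, inv_smul_smul₀ h,
    sub_smul, one_smul, add_sub_cancel]

theorem vecMul_inv_eq_inv_smul {K : Type*} [Field K] {A : Matrix m m K} (hA : IsUnit A)
    {v : m → K} {c : K} (hc : c ≠ 0) (hv : v ᵥ* A = c • v) : v ᵥ* A⁻¹ = c⁻¹ • v := by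
  rw [eq_inv_smul_iff₀ hc, ← smul_vecMul, ← hv, vecMul_vecMul,
    mul_nonsing_inv _ ((isUnit_iff_isUnit_det A).mp hA), vecMul_one]

theorem vecMul_inv_vecMulVec_add_smul_one (u : m → ℝ) {ε : ℝ} (hε : 0 < ε) :
    u ᵥ* (vecMulVec u u + ε • 1)⁻¹ = (u ⬝ᵥ u + ε)⁻¹ • u := by
  have hpos : (vecMulVec u u + ε • 1).PosDef := by
    simpa using PosDef.posSemidef_add (posSemidef_vecMulVec_self_star u) (PosDef.one.smul hε)
  have hu : 0 ≤ u ⬝ᵥ u := by simpa using dotProduct_star_self_nonneg u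
  refine vecMul_inv_eq_inv_smul hpos.isUnit (by positivity) ?_
  rw [vecMul_add, vecMul_vecMulVec, vecMul_smul, vecMul_one, add_smul]

theorem dotProduct_inv_vecMulVec_add_smul_one_mulVec_one_sub_exp (u y : m → ℝ) (hu : u ⬝ᵥ u ≠ 0)
    (s : ℝ) {ε : ℝ} (hε : 0 < ε) :
    u ⬝ᵥ (vecMulVec u u + ε • 1)⁻¹ *ᵥ ((1 - NormedSpace.exp (s • vecMulVec u u)) *ᵥ y) =
      (u ⬝ᵥ u + ε)⁻¹ * ((1 - Real.exp (s * (u ⬝ᵥ u))) * (u ⬝ᵥ y)) := by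
  rw [dotProduct_mulVec, dotProduct_mulVec, vecMul_inv_vecMulVec_add_smul_one u hε, smul_vecMul,
    vecMul_sub, vecMul_one, vecMul_exp_smul_vecMulVec hu, ← Real.exp_eq_exp_ℝ, smul_dotProduct,
    sub_dotProduct, smul_dotProduct, smul_eq_mul, smul_eq_mul]
  ring

end Matrix

theorem kgf_infinite_bandwidth_limit_general {n : ℕ} (hn : 0 < n) (t : ℝ)
    (y : Fin n → ℝ) :
    Tendsto
      (fun ε : ℝ =>
        (fun _ => (1 : ℝ)) ⬝ᵥ
          ((Matrix.of fun _ _ => (1 : ℝ)) + ε • (1 : Matrix (Fin n) (Fin n) ℝ))⁻¹ *ᵥ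
            (((1 : Matrix (Fin n) (Fin n) ℝ) -
              NormedSpace.exp
                (-t • (Matrix.of fun _ _ => (1 : ℝ) : Matrix (Fin n) (Fin n) ℝ))) *ᵥ y))
      (nhdsWithin 0 (Set.Ioi 0))
      (nhds ((1 - Real.exp (-t * n)) * ((1 / n) * ∑ i, y i))) := by
  have hJ : (of fun _ _ => 1 : Matrix (Fin n) (Fin n) ℝ) = vecMulVec 1 1 := by
    ext; simp [vecMulVec_apply]
  have hones : ((1 : Fin n → ℝ) ⬝ᵥ 1) ≠ 0 := by simp [hn.ne']
  have hlim : Tendsto (fun ε : ℝ => ((n : ℝ) + ε)⁻¹ * ((1 - Real.exp (-t * n)) * ∑ i, y i))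
      (nhdsWithin 0 (Set.Ioi 0)) (nhds (((n : ℝ) + 0)⁻¹ * ((1 - Real.exp (-t * n)) * ∑ i, y i))) :=
    ((continuous_const.add continuous_id).continuousAt.inv₀ (by simpa using hn.ne')).mul_const _
      |>.tendsto.mono_left nhdsWithin_le_nhds
  rw [hJ, show (1 - Real.exp (-t * n)) * ((1 / n) * ∑ i, y i) =
    ((n : ℝ) + 0)⁻¹ * ((1 - Real.exp (-t * n)) * ∑ i, y i) by ring]
  refine hlim.congr' (eventually_nhdsWithin_of_forall fun ε hε => ?_)
  dsimp only
  rw [← Pi.one_def, dotProduct_inv_vecMulVec_add_smul_one_mulVec_one_sub_exp 1 y hones (-t) hε,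
    one_dotProduct_one, one_dotProduct, Fintype.card_fin]

theorem kgf_infinite_bandwidth_limit {n : ℕ} (hn : 0 < n) (t : ℝ) (ht : 0 < t)
    (y : Fin n → ℝ) :
    Tendsto
      (fun ε : ℝ =>
        (fun _ => (1 : ℝ)) ⬝ᵥ
          ((Matrix.of fun _ _ => (1 : ℝ)) + ε • (1 : Matrix (Fin n) (Fin n) ℝ))⁻¹ *ᵥ
            (((1 : Matrix (Fin n) (Fin n) ℝ) -
              NormedSpace.exp
                (-t • (Matrix.of fun _ _ => (1 : ℝ) : Matrix (Fin n) (Fin n) ℝ))) *ᵥ y))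
      (nhdsWithin 0 (Set.Ioi 0))
      (nhds ((1 - Real.exp (-t * n)) * ((1 / n) * ∑ i, y i))) :=
  kgf_infinite_bandwidth_limit_general hn t y
end

section
/- With the setup of the kernel gradient flow R² lemma, for every t with R²(t) < 1: s_min(K(t)) ≤ (dR²/dt)(t) · (1/2) · 1/(1 - R²(t)) ≤ s_max(K(t)). -/
/-!
The derivative of `R²` along the flow is `2 ⟪r, K r⟫ / ‖y - ȳ𝟙‖²` with `r = y - f̂`, while
`1 - R² = ‖r‖² / ‖y - ȳ𝟙‖²`, so the normalised quantity is exactly the Rayleigh quotient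
`⟪r, K r⟫ / ‖r‖²`. It lies between the extreme eigenvalues because `K - s_min • 1` and
`s_max • 1 - K` have spectra `σ(K) - s_min ≥ 0` and `s_max - σ(K) ≥ 0`, hence are positive
semidefinite.
-/

open Matrix

namespace Matrix.IsHermitian

variable {n : Type*} [Fintype n] [DecidableEq n] {A : Matrix n n ℝ}

lemma mul_dotProduct_self_le_of_le_eigenvalues (hA : A.IsHermitian) {c : ℝ}
    (hc : ∀ i, c ≤ hA.eigenvalues i) (v : n → ℝ) : c * (v ⬝ᵥ v) ≤ v ⬝ᵥ A *ᵥ v := by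
  have hpsd : (A - algebraMap ℝ _ c).PosSemidef := by
    refine posSemidef_iff_isHermitian_and_spectrum_nonneg.mpr ⟨?_, ?_⟩
    · exact hA.sub (isHermitian_diagonal_of_self_adjoint _ (by ext; simp))
    · rw [← spectrum.sub_singleton_eq, hA.spectrum_real_eq_range_eigenvalues]
      rintro _ ⟨_, ⟨i, rfl⟩, _, rfl, rfl⟩
      exact sub_nonneg.mpr (hc i)
  have hquad := hpsd.dotProduct_mulVec_nonneg v
  rw [star_trivial, sub_mulVec, dotProduct_sub, Algebra.algebraMap_eq_smul_one, smul_mulVec,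
    one_mulVec, dotProduct_smul, smul_eq_mul] at hquad
  linarith

lemma dotProduct_mulVec_le_mul_dotProduct_self_of_eigenvalues_le (hA : A.IsHermitian) {c : ℝ}
    (hc : ∀ i, hA.eigenvalues i ≤ c) (v : n → ℝ) : v ⬝ᵥ A *ᵥ v ≤ c * (v ⬝ᵥ v) := by
  have hpsd : (algebraMap ℝ _ c - A).PosSemidef := by
    refine posSemidef_iff_isHermitian_and_spectrum_nonneg.mpr ⟨?_, ?_⟩
    · exact (isHermitian_diagonal_of_self_adjoint _ (by ext; simp)).sub hA
    · rw [← spectrum.singleton_sub_eq, hA.spectrum_real_eq_range_eigenvalues]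
      rintro _ ⟨_, rfl, _, ⟨i, rfl⟩, rfl⟩
      exact sub_nonneg.mpr (hc i)
  have hquad := hpsd.dotProduct_mulVec_nonneg v
  rw [star_trivial, sub_mulVec, dotProduct_sub, Algebra.algebraMap_eq_smul_one, smul_mulVec,
    one_mulVec, dotProduct_smul, smul_eq_mul] at hquad
  linarith

lemma iInf_eigenvalues_mul_dotProduct_self_le (hA : A.IsHermitian) (v : n → ℝ) :
    (⨅ i, hA.eigenvalues i) * (v ⬝ᵥ v) ≤ v ⬝ᵥ A *ᵥ v :=
  hA.mul_dotProduct_self_le_of_le_eigenvalues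
    (fun i ↦ ciInf_le (Set.finite_range _).bddBelow i) v

lemma dotProduct_mulVec_le_iSup_eigenvalues_mul (hA : A.IsHermitian) (v : n → ℝ) :
    v ⬝ᵥ A *ᵥ v ≤ (⨆ i, hA.eigenvalues i) * (v ⬝ᵥ v) :=
  hA.dotProduct_mulVec_le_mul_dotProduct_self_of_eigenvalues_le
    (fun i ↦ le_ciSup (Set.finite_range _).bddAbove i) v

end Matrix.IsHermitian

theorem r2_derivative_eigen_bounds_general {n : ℕ} (y : Fin n → ℝ) (ybar : ℝ)
    (hy : (∑ i, (y i - ybar) ^ 2) > 0)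
    (K : ℝ → Matrix (Fin n) (Fin n) ℝ)
    (hK : ∀ t, (K t).IsHermitian)
    (f : ℝ → (Fin n → ℝ))
    (t : ℝ)
    (hres : y - f t ≠ 0) :
    (⨅ i, (hK t).eigenvalues i) ≤
        (2 * ((y - f t) ⬝ᵥ (K t) *ᵥ (y - f t)) / (∑ i, (y i - ybar) ^ 2)) * (1 / 2) *
          (1 / (1 - (1 - (∑ i, (y i - f t i) ^ 2) / (∑ i, (y i - ybar) ^ 2)))) ∧
      (2 * ((y - f t) ⬝ᵥ (K t) *ᵥ (y - f t)) / (∑ i, (y i - ybar) ^ 2)) * (1 / 2) *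
          (1 / (1 - (1 - (∑ i, (y i - f t i) ^ 2) / (∑ i, (y i - ybar) ^ 2)))) ≤
        ⨆ i, (hK t).eigenvalues i := by
  set r := y - f t with hr
  have hrr : 0 < r ⬝ᵥ r := by simpa using dotProduct_self_star_pos_iff.mpr hres
  have hres_sq : ∑ i, (y i - f t i) ^ 2 = r ⬝ᵥ r := by simp [dotProduct, sq, hr]
  have hquot : 2 * (r ⬝ᵥ K t *ᵥ r) / (∑ i, (y i - ybar) ^ 2) * (1 / 2) *
      (1 / (1 - (1 - (∑ i, (y i - f t i) ^ 2) / (∑ i, (y i - ybar) ^ 2)))) =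
      (r ⬝ᵥ K t *ᵥ r) / (r ⬝ᵥ r) := by
    rw [hres_sq, sub_sub_cancel]
    field_simp [hy.ne']
  rw [hquot, le_div_iff₀ hrr, div_le_iff₀ hrr]
  exact ⟨(hK t).iInf_eigenvalues_mul_dotProduct_self_le r,
    (hK t).dotProduct_mulVec_le_iSup_eigenvalues_mul r⟩

theorem r2_derivative_eigen_bounds {n : ℕ} (y : Fin n → ℝ) (ybar : ℝ)
    (hybar : ybar = (1 / n) * ∑ i, y i)
    (hy : (∑ i, (y i - ybar) ^ 2) > 0)
    (K : ℝ → Matrix (Fin n) (Fin n) ℝ)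
    (hK : ∀ t, (K t).IsHermitian) (hKpsd : ∀ t, (K t).PosSemidef)
    (f : ℝ → (Fin n → ℝ))
    (hder : ∀ t, HasDerivAt f ((K t) *ᵥ (y - f t)) t)
    (t : ℝ)
    (hR2 : 1 - (∑ i, (y i - f t i) ^ 2) / (∑ i, (y i - ybar) ^ 2) < 1)
    (hres : y - f t ≠ 0) :
    (⨅ i, (hK t).eigenvalues i) ≤
        (2 * ((y - f t) ⬝ᵥ (K t) *ᵥ (y - f t)) / (∑ i, (y i - ybar) ^ 2)) * (1 / 2) *
          (1 / (1 - (1 - (∑ i, (y i - f t i) ^ 2) / (∑ i, (y i - ybar) ^ 2)))) ∧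
      (2 * ((y - f t) ⬝ᵥ (K t) *ᵥ (y - f t)) / (∑ i, (y i - ybar) ^ 2)) * (1 / 2) *
          (1 / (1 - (1 - (∑ i, (y i - f t i) ^ 2) / (∑ i, (y i - ybar) ^ 2)))) ≤
        ⨆ i, (hK t).eigenvalues i :=
  r2_derivative_eigen_bounds_general y ybar hy K hK f t hres
end

section
/- If the kernel K is constant in time and f̂ solves f̂'(t) = K(y - f̂(t)), then d²R²/dt² = -4‖y - f̂(t)‖²_{K²}/‖y - ȳ𝟙‖₂² ≤ 0; i.e., R² is concave in t. -/
open Matrix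

/-! Along the flow the residual `r = y - f̂` satisfies `r' = -K r`, and `dR²/dt = 2 rᵀK r / ‖y - ȳ𝟙‖²`.
Differentiating the quadratic form with `K` symmetric gives `(rᵀK r)' = 2 rᵀK r' = -2 rᵀK² r`,
and `K² = KᴴK` is positive semidefinite. -/

section Derivatives

variable {𝕜 ι : Type*} [NontriviallyNormedField 𝕜] [Fintype ι]
  {u v : 𝕜 → ι → 𝕜} {u' v' : ι → 𝕜} {t : 𝕜}

theorem HasDerivAt.dotProduct (hu : HasDerivAt u u' t) (hv : HasDerivAt v v' t) :
    HasDerivAt (fun s => u s ⬝ᵥ v s) (u' ⬝ᵥ v t + u t ⬝ᵥ v') t := by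
  unfold _root_.dotProduct
  rw [← Finset.sum_add_distrib]
  exact HasDerivAt.fun_sum fun i _ =>
    (hasDerivAt_pi.mp hu i).mul (hasDerivAt_pi.mp hv i)

theorem HasDerivAt.const_mulVec (A : Matrix ι ι 𝕜) (hv : HasDerivAt v v' t) :
    HasDerivAt (fun s => A *ᵥ v s) (A *ᵥ v') t :=
  hasDerivAt_pi.mpr fun i => by
    simpa [mulVec] using (hasDerivAt_const t (A i)).dotProduct hv

theorem HasDerivAt.dotProduct_mulVec_self {A : Matrix ι ι 𝕜} (hA : A.IsSymm)
    (hu : HasDerivAt u u' t) :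
    HasDerivAt (fun s => u s ⬝ᵥ A *ᵥ u s) (2 * (u t ⬝ᵥ A *ᵥ u')) t := by
  have hsymm : u' ⬝ᵥ A *ᵥ u t = u t ⬝ᵥ A *ᵥ u' := by
    rw [dotProduct_mulVec, dotProduct_comm, ← mulVec_transpose, hA.eq]
  convert hu.dotProduct (hu.const_mulVec A) using 1
  rw [hsymm, two_mul]

end Derivatives

theorem Matrix.IsHermitian.dotProduct_mul_self_mulVec_nonneg {ι : Type*} [Fintype ι]
    {A : Matrix ι ι ℝ} (hA : A.IsHermitian) (v : ι → ℝ) :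
    0 ≤ v ⬝ᵥ (A * A) *ᵥ v := by
  have hpsd : (Aᴴ * A).PosSemidef := posSemidef_conjTranspose_mul_self A
  rw [hA.eq] at hpsd
  simpa using hpsd.dotProduct_mulVec_nonneg v

theorem r2_second_derivative_concave_general {n : ℕ} (y : Fin n → ℝ) (ybar : ℝ)
    (K : Matrix (Fin n) (Fin n) ℝ)
    (hK : K.IsHermitian)
    (f : ℝ → (Fin n → ℝ))
    (hder : ∀ t, HasDerivAt f (K *ᵥ (y - f t)) t)
    (t : ℝ) :
    HasDerivAt (fun s => 2 * ((y - f s) ⬝ᵥ K *ᵥ (y - f s)) / (∑ i, (y i - ybar) ^ 2))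
      (-4 * ((y - f t) ⬝ᵥ (K * K) *ᵥ (y - f t)) / (∑ i, (y i - ybar) ^ 2)) t ∧
    -4 * ((y - f t) ⬝ᵥ (K * K) *ᵥ (y - f t)) / (∑ i, (y i - ybar) ^ 2) ≤ 0 := by
  have hKsymm : K.IsSymm := by
    simpa [Matrix.IsSymm, conjTranspose_eq_transpose_of_trivial] using hK.eq
  have hres : HasDerivAt (fun s => y - f s) (-(K *ᵥ (y - f t))) t :=
    (hder t).const_sub y
  have hQ := hres.dotProduct_mulVec_self hKsymm
  rw [mulVec_neg, dotProduct_neg, mulVec_mulVec] at hQ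
  refine ⟨?_, ?_⟩
  · exact ((hQ.const_mul 2).div_const _).congr_deriv (by ring)
  · have hquad := hK.dotProduct_mul_self_mulVec_nonneg (y - f t)
    exact div_nonpos_of_nonpos_of_nonneg (by linarith) (by positivity)

theorem r2_second_derivative_concave {n : ℕ} (y : Fin n → ℝ) (ybar : ℝ)
    (hybar : ybar = (1 / n) * ∑ i, y i)
    (hy : (∑ i, (y i - ybar) ^ 2) > 0)
    (K : Matrix (Fin n) (Fin n) ℝ)
    (hK : K.IsHermitian) (hKpsd : K.PosSemidef)
    (f : ℝ → (Fin n → ℝ))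
    (hder : ∀ t, HasDerivAt f (K *ᵥ (y - f t)) t)
    (t : ℝ) :
    HasDerivAt (fun s => 2 * ((y - f s) ⬝ᵥ K *ᵥ (y - f s)) / (∑ i, (y i - ybar) ^ 2))
      (-4 * ((y - f t) ⬝ᵥ (K * K) *ᵥ (y - f t)) / (∑ i, (y i - ybar) ^ 2)) t ∧
    -4 * ((y - f t) ⬝ᵥ (K * K) *ᵥ (y - f t)) / (∑ i, (y i - ybar) ^ 2) ≤ 0 :=
  r2_second_derivative_concave_general y ybar K hK f hder t
end
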